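/- arXiv:2505.06812 — 7 statements merged into one kernel-verified Lean document; each statement's English description precedes it below -/
import Mathlib

section
/- Let f : ℂ → ℂ be meromorphic on all of ℂ (MeromorphicOn f Set.univ) and suppose that the function z ↦ f(z⁻¹) is meromorphic at 0. Then there exist polynomials p, q ∈ ℂ[X] with q ≠ 0 such that the set {z ∈ ℂ : f z ≠ (Polynomial.eval z p) / (Polynomial.eval z q)} is finite. In other words, a scalar function meromorphic on the extended complex plane coincides, off a finite set, with a rational function. -/
/-!
Meromorphy at `∞` makes `f` analytic near `∞` with `f z = O(z ^ m)`, so the singular set of `f`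
is closed, discrete and bounded, hence finite. Multiplying `f` by `q = ∏ (X - x) ^ (order x)` over
the singular points gives an entire function of polynomial growth, which is a polynomial `p`:
Liouville's theorem, applied after peeling off one power of `z` at a time with `dslope`.
Then `f = p / q` away from the roots of `q`.
-/
open Set Filter Topology Bornology Asymptotics Polynomial

lemma Asymptotics.IsBigO.dslope_zero_pow {𝕜 E : Type*} [NontriviallyNormedField 𝕜]
    [NormedAddCommGroup E] [NormedSpace 𝕜 E] {g : 𝕜 → E} {n : ℕ}
    (hg : g =O[cobounded 𝕜] (· ^ (n + 1))) : dslope g 0 =O[cobounded 𝕜] (· ^ n) := by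
  have hsub : (fun z => g z - g 0) =O[cobounded 𝕜] (· ^ (n + 1)) :=
    hg.sub <| (isBigO_const_one 𝕜 (g 0) _).trans <| by
      simpa using isBigO_pow_pow_cobounded_of_le (R := 𝕜) (Nat.zero_le (n + 1))
  refine ((isBigO_refl (·⁻¹) _).smul hsub).congr' ?_ ?_
  all_goals filter_upwards [eventually_ne_cobounded 0] with z hz
  · rw [dslope_of_ne _ hz, slope_def_module, sub_zero]
  · rw [pow_succ', smul_eq_mul, inv_mul_cancel_left₀ hz]

theorem Differentiable.exists_polynomial_of_isBigO_pow {g : ℂ → ℂ} (hg : Differentiable ℂ g)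
    {n : ℕ} (hgn : g =O[cobounded ℂ] (· ^ n)) : ∃ p : ℂ[X], ∀ z, g z = p.eval z := by
  induction n generalizing g with
  | zero =>
    have hbdd : IsBounded (range g) := hg.continuous.isBounded_range_iff_isBigO.2 <| by
      rw [← Metric.cobounded_eq_cocompact]
      simpa only [pow_zero, norm_one, Pi.one_def] using hgn.norm_right
    obtain ⟨c, hc⟩ := hg.exists_const_forall_eq_of_bounded hbdd
    exact ⟨C c, by simpa using hc⟩
  | succ n ih =>
    have hdiff : Differentiable ℂ (dslope g 0) := fun z =>
      (Complex.differentiableOn_dslope univ_mem).2 hg.differentiableOn |>.differentiableAt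
        (by simp)
    obtain ⟨p, hp⟩ := ih hdiff hgn.dslope_zero_pow
    refine ⟨C (g 0) + X * p, fun z => ?_⟩
    have := sub_smul_dslope g 0 z
    rw [sub_zero, smul_eq_mul, hp] at this
    simp [this]

section Meromorphic

variable {𝕜 E : Type*} [NontriviallyNormedField 𝕜] [NormedAddCommGroup E] [NormedSpace 𝕜 E]
  {f : 𝕜 → E}

lemma MeromorphicAt.eventually_analyticAt_cobounded_of_comp_inv [CompleteSpace E]
    (hf : MeromorphicAt (fun z => f z⁻¹) 0) : ∀ᶠ z in cobounded 𝕜, AnalyticAt 𝕜 f z := by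
  filter_upwards [tendsto_inv₀_cobounded'.eventually hf.eventually_analyticAt,
    eventually_ne_cobounded 0] with z hz hz0
  simpa [Function.comp_def] using hz.comp (analyticAt_inv hz0)

lemma MeromorphicAt.exists_isBigO_cobounded_pow_of_comp_inv
    (hf : MeromorphicAt (fun z => f z⁻¹) 0) : ∃ m : ℕ, f =O[cobounded 𝕜] (· ^ m) := by
  obtain ⟨m, hm⟩ := hf
  have hbdd := (hm.continuousAt.tendsto.comp tendsto_inv₀_cobounded).isBigO_one 𝕜
  refine ⟨m, ((isBigO_refl (fun z : 𝕜 => z ^ m) (cobounded 𝕜)).smul hbdd).congr' ?_ ?_⟩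
  all_goals filter_upwards [eventually_ne_cobounded 0] with z hz
  · simp [smul_smul, hz]
  · simp

lemma MeromorphicOn.finite_setOf_not_analyticAt [ProperSpace 𝕜] [CompleteSpace E]
    (hf : MeromorphicOn f univ) (hinf : ∀ᶠ z in cobounded 𝕜, AnalyticAt 𝕜 f z) :
    {z | ¬AnalyticAt 𝕜 f z}.Finite := by
  set S := {z | ¬AnalyticAt 𝕜 f z}
  have hK : IsCompact (closure S) := (isBounded_compl_iff.2 hinf).isCompact_closure
  refine (hK.finite_sdiff_of_mem_codiscreteWithin
    ((hf.mono_set (subset_univ _)).eventually_codiscreteWithin_analyticAt f)).subset ?_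
  exact fun z hz => ⟨subset_closure hz, hz⟩

lemma MeromorphicOn.exists_polynomial_smul_analyticAt
    (hf : MeromorphicOn f univ) (hsing : {z | ¬AnalyticAt 𝕜 f z}.Finite) :
    ∃ q : 𝕜[X], q ≠ 0 ∧ ∀ z, AnalyticAt 𝕜 (fun w => q.eval w • f w) z := by
  classical
  choose order horder using fun x => hf x (mem_univ x)
  let T := hsing.toFinset
  refine ⟨∏ x ∈ T, (X - C x) ^ order x,
    Finset.prod_ne_zero_iff.2 fun x _ => pow_ne_zero _ (X_sub_C_ne_zero x), fun z => ?_⟩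
  by_cases hz : z ∈ T
  · have hsplit : ∀ w, (∏ x ∈ T, (X - C x) ^ order x).eval w • f w =
        (∏ x ∈ T.erase z, (X - C x) ^ order x).eval w • ((w - z) ^ order z • f w) := by
      intro w
      rw [← Finset.mul_prod_erase T _ hz, eval_mul, mul_comm, mul_smul]
      simp
    simp_rw [hsplit]
    exact (AnalyticOnNhd.eval_polynomial _ z trivial).fun_smul (horder z)
  · have hfz : AnalyticAt 𝕜 f z := by simpa [T] using hz
    exact (AnalyticOnNhd.eval_polynomial _ z trivial).fun_smul hfz

end Meromorphic

/-- A scalar function meromorphic on the extended complex plane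
(i.e. meromorphic on all of `ℂ` and such that `z ↦ f z⁻¹` is meromorphic at `0`)
coincides, off a finite set, with a rational function `p / q`. -/
theorem meromorphic_on_extended_plane_eq_rational_off_finite
    (f : ℂ → ℂ) (h1 : MeromorphicOn f Set.univ)
    (h2 : MeromorphicAt (fun z : ℂ => f z⁻¹) 0) :
    ∃ p q : Polynomial ℂ, q ≠ 0 ∧
      {z : ℂ | f z ≠ Polynomial.eval z p / Polynomial.eval z q}.Finite := by
  obtain ⟨m, hfm⟩ := h2.exists_isBigO_cobounded_pow_of_comp_inv
  obtain ⟨q, hq, hqf⟩ := h1.exists_polynomial_smul_analyticAt <|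
    h1.finite_setOf_not_analyticAt h2.eventually_analyticAt_cobounded_of_comp_inv
  have hqd : q.eval =O[cobounded ℂ] (· ^ q.natDegree) := by
    simpa using isBigO_cobounded_of_degree_le (P := q) (Q := X ^ q.natDegree)
      (by simp [degree_le_natDegree])
  have hgrowth : (fun z => q.eval z • f z) =O[cobounded ℂ] (· ^ (q.natDegree + m)) := by
    simpa only [smul_eq_mul, pow_add] using hqd.smul hfm
  obtain ⟨p, hp⟩ := Differentiable.exists_polynomial_of_isBigO_pow
    (fun z => (hqf z).differentiableAt) hgrowth
  refine ⟨p, q, hq, (q.finite_setOfPred_isRoot hq).subset fun z hz => ?_⟩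
  by_contra hroot
  exact hz (eq_div_of_mul_eq hroot (by simpa [mul_comm] using hp z))
end

section
/- In the diagonalization setting, fix an index i and a point α ∈ ℂ, and suppose the diagonal entry d_i has a zero of order s ≥ 1 at α (ord_α(d_i) = s). Then: (1) T_i(α) ≠ 0 (the evaluation of the i-th column of T at α is a nonzero vector); (2) Q.mulVec T_i = d_i • Ŝ_i as vectors over RatFunc ℂ; (3) every nonzero component of the vector Q.mulVec T_i has ord_α ≥ s; and (4) at least one component of Q.mulVec T_i has ord_α exactly equal to s. Thus T_i is a root function of Q at α of exact order s. -/
set_option synthInstance.maxHeartbeats 1000000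
set_option maxHeartbeats 1000000

/-- `HasOrdAt α r k` : the rational function `r` has order `k ∈ ℤ` at `α`, i.e.
`r = (X − α)^k · (p/q)` with `p(α) ≠ 0` and `q(α) ≠ 0`. -/
def HasOrdAt (α : ℂ) (r : RatFunc ℂ) (k : ℤ) : Prop :=
  ∃ p q : Polynomial ℂ, Polynomial.eval α p ≠ 0 ∧ Polynomial.eval α q ≠ 0 ∧
    r = (RatFunc.X - RatFunc.C α) ^ k *
      (algebraMap (Polynomial ℂ) (RatFunc ℂ) p / algebraMap (Polynomial ℂ) (RatFunc ℂ) q)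

/-- Entrywise embedding of a polynomial matrix into matrices over `RatFunc ℂ`. -/
noncomputable def matRF {n : ℕ} (M : Matrix (Fin n) (Fin n) (Polynomial ℂ)) :
    Matrix (Fin n) (Fin n) (RatFunc ℂ) :=
  M.map (algebraMap (Polynomial ℂ) (RatFunc ℂ))

/-- The `i`-th column of a polynomial matrix, regarded over `RatFunc ℂ`. -/
noncomputable def colRF {n : ℕ} (M : Matrix (Fin n) (Fin n) (Polynomial ℂ)) (i : Fin n) :
    Fin n → RatFunc ℂ :=
  fun k => algebraMap (Polynomial ℂ) (RatFunc ℂ) (M k i)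

/-- The `i`-th column of a polynomial matrix evaluated (entrywise) at `α`. -/
def evalCol {n : ℕ} (M : Matrix (Fin n) (Fin n) (Polynomial ℂ)) (i : Fin n) (α : ℂ) :
    Fin n → ℂ :=
  fun k => Polynomial.eval α (M k i)

/-!
From `D = S Q T` with `S` unimodular we get `Q T = S⁻¹ D`, and since `D` is diagonal the `i`-th
column reads `Q T_i = d_i Ŝ_i`. Every entry of `Ŝ_i` is a polynomial, so multiplying `d_i` by it
can only raise the order at `α`. Because `S⁻¹` and `T` are unimodular, their determinants stay
nonzero after evaluation at `α`, so neither `T_i(α)` nor `Ŝ_i(α)` vanishes; an entry of `Ŝ_i`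
with nonzero value at `α` leaves the order of `d_i` equal to `s`.
-/

open Polynomial
open scoped Matrix

namespace Matrix

variable {ι R : Type*} [Fintype ι] [DecidableEq ι]

theorem exists_map_ne_zero_of_isUnit_det {K : Type*} [CommRing R] [CommRing K] [Nontrivial K]
    (f : R →+* K) {M : Matrix ι ι R} (hM : IsUnit M.det) (i : ι) : ∃ k, f (M k i) ≠ 0 := by
  by_contra! hcol
  have hunit : IsUnit (M.map f).det := by
    rw [← RingHom.mapMatrix_apply, ← RingHom.map_det]
    exact hM.map f
  exact hunit.ne_zero (det_eq_zero_of_column_eq_zero i hcol)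

theorem mulVec_col_eq_smul_col_of_mul_eq [CommSemiring R] {A B C D : Matrix ι ι R}
    (h : A * B = C * D) (hD : D.IsDiag) (i : ι) :
    A *ᵥ (fun k => B k i) = D i i • fun k => C k i := by
  funext k
  change (A * B) k i = D i i * C k i
  rw [h, ← hD.diagonal_diag, mul_diagonal, mul_comm, diagonal_apply_eq, diag_apply]

end Matrix

theorem RatFunc.X_sub_C_eq_algebraMap {K : Type*} [Field K] (a : K) :
    (RatFunc.X - RatFunc.C a : RatFunc K) = algebraMap K[X] (RatFunc K) (Polynomial.X - .C a) := by
  rw [map_sub, RatFunc.algebraMap_X, RatFunc.algebraMap_C]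

theorem RatFunc.X_sub_C_ne_zero {K : Type*} [Field K] (a : K) :
    (RatFunc.X - RatFunc.C a : RatFunc K) ≠ 0 := by
  rw [RatFunc.X_sub_C_eq_algebraMap]
  exact RatFunc.algebraMap_ne_zero (Polynomial.X_sub_C_ne_zero a)

theorem HasOrdAt.mul_algebraMap {α : ℂ} {r : RatFunc ℂ} {k : ℤ} (h : HasOrdAt α r k)
    {p : ℂ[X]} (hp : p ≠ 0) :
    HasOrdAt α (r * algebraMap ℂ[X] (RatFunc ℂ) p) (k + p.rootMultiplicity α) := by
  obtain ⟨u, v, hu, hv, rfl⟩ := h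
  set m := p.rootMultiplicity α
  set w := p /ₘ (Polynomial.X - .C α) ^ m
  have hw : w.eval α ≠ 0 := Polynomial.eval_divByMonic_pow_rootMultiplicity_ne_zero α hp
  have hp_eq : algebraMap ℂ[X] (RatFunc ℂ) p
      = (RatFunc.X - RatFunc.C α) ^ (m : ℤ) * algebraMap ℂ[X] (RatFunc ℂ) w := by
    rw [← Polynomial.pow_mul_divByMonic_rootMultiplicity_eq p α, map_mul, map_pow,
      RatFunc.X_sub_C_eq_algebraMap, zpow_natCast]
  refine ⟨u * w, v, by simp [hu, hw], hv, ?_⟩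
  rw [hp_eq, zpow_add₀ (RatFunc.X_sub_C_ne_zero α), map_mul]
  ring

theorem HasOrdAt.mul_algebraMap_of_eval_ne_zero {α : ℂ} {r : RatFunc ℂ} {k : ℤ}
    (h : HasOrdAt α r k) {p : ℂ[X]} (hp : p.eval α ≠ 0) :
    HasOrdAt α (r * algebraMap ℂ[X] (RatFunc ℂ) p) k := by
  simpa [Polynomial.rootMultiplicity_eq_zero hp] using
    h.mul_algebraMap (p := p) (by rintro rfl; simp at hp)

theorem matRF_nonsing_inv_mul {n : ℕ} {S : Matrix (Fin n) (Fin n) ℂ[X]} (hS : IsUnit S.det) :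
    matRF S⁻¹ * matRF S = 1 := by
  rw [matRF, matRF, ← Matrix.map_mul, Matrix.nonsing_inv_mul S hS,
    Matrix.map_one _ (map_zero _) (map_one _)]

theorem column_of_T_is_root_function_of_exact_order_general
    (n : ℕ)
    (Q : Matrix (Fin n) (Fin n) (RatFunc ℂ))
    (S T : Matrix (Fin n) (Fin n) (Polynomial ℂ))
    (hS : IsUnit S.det) (hT : IsUnit T.det)
    (D : Matrix (Fin n) (Fin n) (RatFunc ℂ))
    (hD : D = matRF S * Q * matRF T) (hdiag : D.IsDiag)
    (i : Fin n) (α : ℂ) (s : ℕ)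
    (hzero : HasOrdAt α (D i i) (s : ℤ)) :
    evalCol T i α ≠ 0 ∧
    Q.mulVec (colRF T i) = D i i • colRF (S⁻¹) i ∧
    (∀ k : Fin n, Q.mulVec (colRF T i) k ≠ 0 →
      ∃ m : ℤ, HasOrdAt α (Q.mulVec (colRF T i) k) m ∧ (s : ℤ) ≤ m) ∧
    (∃ k : Fin n, HasOrdAt α (Q.mulVec (colRF T i) k) (s : ℤ)) := by
  have hQT : Q * matRF T = matRF S⁻¹ * D := by
    rw [hD, ← Matrix.mul_assoc, ← Matrix.mul_assoc, matRF_nonsing_inv_mul hS, Matrix.one_mul]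
  have hcol : Q *ᵥ colRF T i = D i i • colRF S⁻¹ i :=
    Matrix.mulVec_col_eq_smul_col_of_mul_eq hQT hdiag i
  have hentry (k : Fin n) :
      (Q *ᵥ colRF T i) k = D i i * algebraMap ℂ[X] (RatFunc ℂ) (S⁻¹ k i) := by
    rw [hcol]; rfl
  refine ⟨?_, hcol, fun k hk => ?_, ?_⟩
  · obtain ⟨k, hk⟩ := Matrix.exists_map_ne_zero_of_isUnit_det (Polynomial.evalRingHom α) hT i
    exact fun h => hk (congrFun h k)
  · rw [hentry] at hk ⊢
    have hp : S⁻¹ k i ≠ 0 := fun h => by simp [h] at hk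
    exact ⟨_, hzero.mul_algebraMap hp, by omega⟩
  · obtain ⟨k, hk⟩ := Matrix.exists_map_ne_zero_of_isUnit_det (Polynomial.evalRingHom α)
      (Matrix.isUnit_nonsing_inv_det S hS) i
    exact ⟨k, hentry k ▸ hzero.mul_algebraMap_of_eval_ne_zero hk⟩

/-- In the diagonalization setting `D = S·Q·T`, if the diagonal entry
`d_i = D i i` has a zero of order `s ≥ 1` at `α`, then `T_i(α) ≠ 0`,
`Q.mulVec T_i = d_i • Ŝ_i`, every nonzero component of `Q.mulVec T_i` has order `≥ s`
at `α`, and some component has order exactly `s`: `T_i` is a root function of `Q` at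
`α` of exact order `s`. -/
theorem column_of_T_is_root_function_of_exact_order
    (n : ℕ) (hn : 1 ≤ n)
    (Q : Matrix (Fin n) (Fin n) (RatFunc ℂ)) (hQ : Q.det ≠ 0)
    (S T : Matrix (Fin n) (Fin n) (Polynomial ℂ))
    (hS : IsUnit S.det) (hT : IsUnit T.det)
    (D : Matrix (Fin n) (Fin n) (RatFunc ℂ))
    (hD : D = matRF S * Q * matRF T) (hdiag : D.IsDiag)
    (i : Fin n) (α : ℂ) (s : ℕ) (hs : 1 ≤ s)
    (hzero : HasOrdAt α (D i i) (s : ℤ)) :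
    evalCol T i α ≠ 0 ∧
    Q.mulVec (colRF T i) = D i i • colRF (S⁻¹) i ∧
    (∀ k : Fin n, Q.mulVec (colRF T i) k ≠ 0 →
      ∃ m : ℤ, HasOrdAt α (Q.mulVec (colRF T i) k) m ∧ (s : ℤ) ≤ m) ∧
    (∃ k : Fin n, HasOrdAt α (Q.mulVec (colRF T i) k) (s : ℤ)) :=
  column_of_T_is_root_function_of_exact_order_general n Q S T hS hT D hD hdiag i α s hzero
end

section
/- In the diagonalization setting, fix α ∈ ℂ and let Ω₀(α) := {i : ord_α(d_i) ≥ 1} be the set of indices whose diagonal entry vanishes at α. Then: (1) the vectors {T_i(α) : i ∈ Ω₀(α)} are linearly independent in ℂⁿ; and (2) for every vector φ with entries in ℂ[X] such that φ(α) ≠ 0 and such that every component of Q.mulVec φ (over RatFunc ℂ) is either zero or has ord_α ≥ 1, the vector φ(α) lies in the ℂ-linear span of {T_i(α) : i ∈ Ω₀(α)}. Hence this span is the generalized kernel of Q at α and its dimension is the geometric multiplicity of the zero α. -/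
set_option synthInstance.maxHeartbeats 1000000
set_option maxHeartbeats 1000000

/-- `r` vanishes at `α`: it is `0` or of the form `a/b` with `a(α)=0`, `b(α)≠0`. -/
def VanAt (α : ℂ) (r : RatFunc ℂ) : Prop :=
  ∃ a b : Polynomial ℂ, Polynomial.eval α a = 0 ∧ Polynomial.eval α b ≠ 0 ∧
    r = algebraMap (Polynomial ℂ) (RatFunc ℂ) a / algebraMap (Polynomial ℂ) (RatFunc ℂ) b

lemma algebraMap_ne_zero' {b : Polynomial ℂ} (hb : b ≠ 0) :
    algebraMap (Polynomial ℂ) (RatFunc ℂ) b ≠ 0 := by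
  simpa using (map_ne_zero_iff _ (IsFractionRing.injective (Polynomial ℂ) (RatFunc ℂ))).2 hb

lemma vanAt_zero (α : ℂ) : VanAt α 0 :=
  ⟨0, 1, by simp, by simp, by simp⟩

lemma vanAt_add {α : ℂ} {r s : RatFunc ℂ} (hr : VanAt α r) (hs : VanAt α s) :
    VanAt α (r + s) := by
  obtain ⟨a₁, b₁, ha₁, hb₁, rfl⟩ := hr
  obtain ⟨a₂, b₂, ha₂, hb₂, rfl⟩ := hs
  have hb₁' : b₁ ≠ 0 := fun h => hb₁ (by simp [h])
  have hb₂' : b₂ ≠ 0 := fun h => hb₂ (by simp [h])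
  refine ⟨a₁ * b₂ + a₂ * b₁, b₁ * b₂, by simp [ha₁, ha₂], by simp [hb₁, hb₂], ?_⟩
  rw [div_add_div _ _ (algebraMap_ne_zero' hb₁') (algebraMap_ne_zero' hb₂')]
  push_cast [map_add, map_mul]
  ring_nf

lemma vanAt_polmul {α : ℂ} (c : Polynomial ℂ) {r : RatFunc ℂ} (hr : VanAt α r) :
    VanAt α (algebraMap (Polynomial ℂ) (RatFunc ℂ) c * r) := by
  obtain ⟨a, b, ha, hb, rfl⟩ := hr
  exact ⟨c * a, b, by simp [ha], hb, by rw [map_mul, mul_div_assoc]⟩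

lemma vanAt_of_ord {α : ℂ} {r : RatFunc ℂ} {m : ℤ} (hm : 1 ≤ m) (h : HasOrdAt α r m) :
    VanAt α r := by
  obtain ⟨p, q, hp, hq, rfl⟩ := h
  have hXC : (RatFunc.X - RatFunc.C α)
      = algebraMap (Polynomial ℂ) (RatFunc ℂ) (Polynomial.X - Polynomial.C α) := by
    simp [RatFunc.algebraMap_X, map_sub]
  have hmn : m = (m.toNat : ℤ) := (Int.toNat_of_nonneg (by omega)).symm
  refine ⟨(Polynomial.X - Polynomial.C α) ^ m.toNat * p, q, ?_, hq, ?_⟩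
  · have : 1 ≤ m.toNat := by omega
    simp [Polynomial.eval_pow, zero_pow (by omega : m.toNat ≠ 0)]
  · conv_lhs => rw [hmn]
    rw [zpow_natCast, hXC, map_mul, map_pow, mul_div_assoc]

/-- Key lemma: if `d ≠ 0` has no zero of positive order at `α` and `d·ψ` vanishes at
`α`, then `ψ(α)=0`. -/
lemma eval_eq_zero_of_vanAt {α : ℂ} {d : RatFunc ℂ} (hd : d ≠ 0) {ψ : Polynomial ℂ}
    (hno : ¬ ∃ s : ℤ, 1 ≤ s ∧ HasOrdAt α d s)
    (hv : VanAt α (d * algebraMap (Polynomial ℂ) (RatFunc ℂ) ψ)) :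
    Polynomial.eval α ψ = 0 := by
  by_contra hψ
  apply hno
  obtain ⟨a, b, ha, hb, heq⟩ := hv
  have hψ0 : ψ ≠ 0 := fun h => hψ (by simp [h])
  have hb0 : b ≠ 0 := fun h => hb (by simp [h])
  have hιψ : algebraMap (Polynomial ℂ) (RatFunc ℂ) ψ ≠ 0 := algebraMap_ne_zero' hψ0
  have ha0 : a ≠ 0 := by
    rintro rfl
    rw [map_zero, zero_div] at heq
    exact (mul_ne_zero hd hιψ) heq
  have hd_eq : d = algebraMap (Polynomial ℂ) (RatFunc ℂ) a
      / algebraMap (Polynomial ℂ) (RatFunc ℂ) (b * ψ) := by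
    have hbι := algebraMap_ne_zero' hb0
    rw [map_mul, eq_div_iff (mul_ne_zero hbι hιψ)]
    rw [eq_div_iff hbι] at heq
    linear_combination heq
  set s := Polynomial.rootMultiplicity α a with hs
  obtain ⟨c, hc, hnd⟩ := a.exists_eq_pow_rootMultiplicity_mul_and_not_dvd ha0 α
  have hspos : 0 < s := (Polynomial.rootMultiplicity_pos ha0).2 ha
  have hcα : Polynomial.eval α c ≠ 0 := fun h =>
    hnd (Polynomial.dvd_iff_isRoot.2 h)
  refine ⟨(s : ℤ), by exact_mod_cast hspos, c, b * ψ, hcα,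
    by rw [Polynomial.eval_mul]; exact mul_ne_zero hb hψ, ?_⟩
  have hXC : (RatFunc.X - RatFunc.C α)
      = algebraMap (Polynomial ℂ) (RatFunc ℂ) (Polynomial.X - Polynomial.C α) := by
    simp [RatFunc.algebraMap_X, map_sub]
  rw [hd_eq, hc, zpow_natCast, hXC, map_mul, map_pow, mul_div_assoc]

/-- In the diagonalization setting `D = S·Q·T`, for `α ∈ ℂ` let
`Ω₀(α)` consist of the indices `i` with `ord_α(d_i) ≥ 1`. Then the vectors `T_i(α)`,
`i ∈ Ω₀(α)`, are linearly independent, and for every polynomial vector `φ` with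
`φ(α) ≠ 0` all of whose components of `Q.mulVec φ` are zero or of order `≥ 1` at `α`,
the vector `φ(α)` lies in the span of `{T_i(α) : i ∈ Ω₀(α)}`: this span is the
generalized kernel of `Q` at `α`. -/
theorem generalized_kernel_of_Q_at_zero
    (n : ℕ) (hn : 1 ≤ n)
    (Q : Matrix (Fin n) (Fin n) (RatFunc ℂ)) (hQ : Q.det ≠ 0)
    (S T : Matrix (Fin n) (Fin n) (Polynomial ℂ))
    (hS : IsUnit S.det) (hT : IsUnit T.det)
    (D : Matrix (Fin n) (Fin n) (RatFunc ℂ))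
    (hD : D = matRF S * Q * matRF T) (hdiag : D.IsDiag)
    (α : ℂ) :
    LinearIndependent ℂ
      (fun i : {i : Fin n // ∃ s : ℤ, 1 ≤ s ∧ HasOrdAt α (D i i) s} =>
        evalCol T i.1 α) ∧
    ∀ φ : Fin n → Polynomial ℂ,
      (fun k => Polynomial.eval α (φ k)) ≠ 0 →
      (∀ k : Fin n,
          Q.mulVec (fun j => algebraMap (Polynomial ℂ) (RatFunc ℂ) (φ j)) k = 0 ∨
          ∃ m : ℤ, 1 ≤ m ∧
            HasOrdAt α (Q.mulVec (fun j => algebraMap (Polynomial ℂ) (RatFunc ℂ) (φ j)) k) m) →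
      (fun k => Polynomial.eval α (φ k)) ∈
        Submodule.span ℂ
          {v : Fin n → ℂ | ∃ i : Fin n, (∃ s : ℤ, 1 ≤ s ∧ HasOrdAt α (D i i) s) ∧
            v = evalCol T i α} := by
  classical
  obtain ⟨rT, hrT, hCT⟩ := Polynomial.isUnit_iff.1 hT
  have hTα : IsUnit (T.map (Polynomial.eval α)).det := by
    have hdet : (T.map (Polynomial.eval α)).det = Polynomial.eval α T.det := by
      simpa using (RingHom.map_det (Polynomial.evalRingHom α) T).symm
    rw [hdet, ← hCT, Polynomial.eval_C]
    exact hrT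
  have hli : LinearIndependent ℂ (fun i => (T.map (Polynomial.eval α)).transpose i) :=
    Matrix.linearIndependent_cols_iff_isUnit.2 ((Matrix.isUnit_iff_isUnit_det _).2 hTα)
  constructor
  · have heq : (fun i : {i : Fin n // ∃ s : ℤ, 1 ≤ s ∧ HasOrdAt α (D i i) s} =>
        evalCol T i.1 α)
        = (fun i => (T.map (Polynomial.eval α)).transpose i) ∘ Subtype.val := by
      funext i; funext k
      simp [evalCol, Matrix.transpose_apply, Matrix.map_apply]
    rw [heq]
    exact hli.comp _ Subtype.val_injective
  · intro φ hφ hcond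
    haveI := T.invertibleOfIsUnitDet hT
    set ψ : Fin n → Polynomial ℂ := (⅟T).mulVec φ with hψdef
    have hφψ : T.mulVec ψ = φ := by
      rw [hψdef, Matrix.mulVec_mulVec, mul_invOf_self, Matrix.one_mulVec]
    have hmapvec : ∀ (M : Matrix (Fin n) (Fin n) (Polynomial ℂ)) (v : Fin n → Polynomial ℂ),
        (matRF M).mulVec (fun j => algebraMap (Polynomial ℂ) (RatFunc ℂ) (v j))
          = fun k => algebraMap (Polynomial ℂ) (RatFunc ℂ) (M.mulVec v k) := by
      intro M v; funext k
      simp [Matrix.mulVec, dotProduct, matRF, Matrix.map_apply, map_sum, map_mul]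
    have hDdiag : D = Matrix.diagonal (fun i => D i i) := by
      ext i j
      rcases eq_or_ne i j with rfl | h
      · simp
      · simp [Matrix.diagonal_apply_ne _ h, hdiag h]
    have hdet : D.det ≠ 0 := by
      rw [hD, Matrix.det_mul, Matrix.det_mul]
      have hSd : (matRF S).det ≠ 0 := by
        have : (matRF S).det = algebraMap (Polynomial ℂ) (RatFunc ℂ) S.det := by
          simpa [matRF] using (RingHom.map_det (algebraMap (Polynomial ℂ) (RatFunc ℂ)) S).symm
        rw [this]
        exact algebraMap_ne_zero' hS.ne_zero
      have hTd : (matRF T).det ≠ 0 := by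
        have : (matRF T).det = algebraMap (Polynomial ℂ) (RatFunc ℂ) T.det := by
          simpa [matRF] using (RingHom.map_det (algebraMap (Polynomial ℂ) (RatFunc ℂ)) T).symm
        rw [this]
        exact algebraMap_ne_zero' hT.ne_zero
      exact mul_ne_zero (mul_ne_zero hSd hQ) hTd
    have hdii : ∀ i, D i i ≠ 0 := by
      intro i hzero
      apply hdet
      rw [hDdiag, Matrix.det_diagonal]
      exact Finset.prod_eq_zero (Finset.mem_univ i) hzero
    have hkey : ∀ i, D i i * algebraMap (Polynomial ℂ) (RatFunc ℂ) (ψ i)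
        = ∑ k, algebraMap (Polynomial ℂ) (RatFunc ℂ) (S i k)
            * Q.mulVec (fun j => algebraMap (Polynomial ℂ) (RatFunc ℂ) (φ j)) k := by
      intro i
      have h1 : D.mulVec (fun j => algebraMap (Polynomial ℂ) (RatFunc ℂ) (ψ j))
          = (matRF S).mulVec
              (Q.mulVec (fun j => algebraMap (Polynomial ℂ) (RatFunc ℂ) (φ j))) := by
        conv_lhs => rw [hD]
        rw [← hφψ, ← hmapvec T ψ, ← Matrix.mulVec_mulVec, ← Matrix.mulVec_mulVec]
      have h2 := congrFun h1 i
      conv_lhs at h2 => rw [hDdiag]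
      rw [Matrix.mulVec_diagonal] at h2
      rw [h2]
      simp [Matrix.mulVec, dotProduct, matRF, Matrix.map_apply]
    have hvan : ∀ i, VanAt α (D i i * algebraMap (Polynomial ℂ) (RatFunc ℂ) (ψ i)) := by
      intro i
      rw [hkey i]
      apply Finset.sum_induction _ _ (fun a b ha hb => vanAt_add ha hb) (vanAt_zero α)
      intro k _
      rcases hcond k with h0 | ⟨m, hm, hord⟩
      · rw [h0, mul_zero]; exact vanAt_zero α
      · exact vanAt_polmul _ (vanAt_of_ord hm hord)
    have hzero : ∀ i, ¬(∃ s : ℤ, 1 ≤ s ∧ HasOrdAt α (D i i) s) →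
        Polynomial.eval α (ψ i) = 0 :=
      fun i hi => eval_eq_zero_of_vanAt (hdii i) hi (hvan i)
    have hsum : (fun k => Polynomial.eval α (φ k))
        = ∑ i, Polynomial.eval α (ψ i) • evalCol T i α := by
      funext k
      rw [← hφψ]
      simp only [Matrix.mulVec, dotProduct, Finset.sum_apply, Pi.smul_apply,
        Polynomial.eval_finset_sum, Polynomial.eval_mul, evalCol, smul_eq_mul]
      exact Finset.sum_congr rfl fun i _ => mul_comm _ _
    rw [hsum]
    apply Submodule.sum_mem
    intro i _
    by_cases hi : ∃ s : ℤ, 1 ≤ s ∧ HasOrdAt α (D i i) s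
    · exact Submodule.smul_mem _ _ (Submodule.subset_span ⟨i, hi, rfl⟩)
    · rw [hzero i hi, zero_smul]; exact zero_mem _
end

section
/- In the diagonalization setting, fix β ∈ ℂ and let Ω_p(β) := {j : ord_β(d_j) ≤ −1} be the set of indices whose diagonal entry has a pole at β. Then: (1) the vectors {Ŝ_j(β) : j ∈ Ω_p(β)} are linearly independent in ℂⁿ; and (2) for every vector φ̂ with entries in ℂ[X] such that φ̂(β) ≠ 0 and such that every component of Q⁻¹.mulVec φ̂ (over RatFunc ℂ) is either zero or has ord_β ≥ 1, the vector φ̂(β) lies in the ℂ-linear span of {Ŝ_j(β) : j ∈ Ω_p(β)}. Hence this span is the generalized kernel of Q⁻¹ at β and its dimension is the geometric multiplicity of the pole β of Q. -/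
/-!
Put `ψ = S φ̂`. From `D = S Q T` we get `D⁻¹ ψ = T⁻¹ (Q⁻¹ φ̂)`; the entries of `Q⁻¹ φ̂` are
regular and vanish at `β`, and `T⁻¹` is polynomial, so `ψ_j / d_j` vanishes at `β` for every `j`.
Hence `ψ_j(β) ≠ 0` forces a pole of `d_j` at `β`, and `φ̂(β) = (S⁻¹ ψ)(β) = ∑ ψ_j(β) Ŝ_j(β)` only
involves indices in `Ω_p(β)`. The `Ŝ_j(β)` are the columns of `S⁻¹(β)`, whose determinant is a
nonzero constant, so they are linearly independent.
-/

set_option synthInstance.maxHeartbeats 1000000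
set_option maxHeartbeats 1000000

open Polynomial

section RationalFunction

variable {K : Type*} [Field K]

/-- `{0} ∪ {r | ord_β r ≥ 1}`, presented so that it is visibly a `K[X]`-submodule. -/
def vanishingAt (β : K) : Submodule K[X] (RatFunc K) where
  carrier := {r | ∃ p q : K[X], q.eval β ≠ 0 ∧ p.eval β = 0 ∧
    r = algebraMap K[X] (RatFunc K) p / algebraMap K[X] (RatFunc K) q}
  zero_mem' := ⟨0, 1, by simp, by simp, by simp⟩
  add_mem' := by
    rintro _ _ ⟨p₁, q₁, hq₁, hp₁, rfl⟩ ⟨p₂, q₂, hq₂, hp₂, rfl⟩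
    have h₁ : algebraMap K[X] (RatFunc K) q₁ ≠ 0 :=
      RatFunc.algebraMap_ne_zero (by rintro rfl; simp at hq₁)
    have h₂ : algebraMap K[X] (RatFunc K) q₂ ≠ 0 :=
      RatFunc.algebraMap_ne_zero (by rintro rfl; simp at hq₂)
    refine ⟨p₁ * q₂ + q₁ * p₂, q₁ * q₂, by simp [hq₁, hq₂], by simp [hp₁, hp₂], ?_⟩
    rw [div_add_div _ _ h₁ h₂]
    simp only [map_add, map_mul]
  smul_mem' := by
    rintro t _ ⟨p, q, hq, hp, rfl⟩
    exact ⟨t * p, q, hq, by simp [hp], by rw [Algebra.smul_def, map_mul, mul_div_assoc]⟩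

theorem algebraMap_X_sub_C (β : K) :
    algebraMap K[X] (RatFunc K) (X - C β) = RatFunc.X - RatFunc.C β := by
  rw [map_sub, RatFunc.algebraMap_X, RatFunc.algebraMap_C]

end RationalFunction

theorem HasOrdAt.inv {β : ℂ} {r : RatFunc ℂ} {k : ℤ} (h : HasOrdAt β r k) :
    HasOrdAt β r⁻¹ (-k) := by
  obtain ⟨p, q, hp, hq, rfl⟩ := h
  exact ⟨q, p, hq, hp, by rw [mul_inv, inv_div, zpow_neg]⟩

theorem HasOrdAt.mul_algebraMap_s8 {β : ℂ} {r : RatFunc ℂ} {k : ℤ} (h : HasOrdAt β r k)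
    {ψ : ℂ[X]} (hψ : ψ.eval β ≠ 0) :
    HasOrdAt β (r * algebraMap ℂ[X] (RatFunc ℂ) ψ) k := by
  obtain ⟨p, q, hp, hq, rfl⟩ := h
  refine ⟨p * ψ, q, by simp [hp, hψ], hq, ?_⟩
  rw [map_mul, mul_assoc, div_mul_eq_mul_div]

theorem HasOrdAt.mem_vanishingAt {β : ℂ} {r : RatFunc ℂ} {m : ℤ} (h : HasOrdAt β r m)
    (hm : 1 ≤ m) : r ∈ vanishingAt β := by
  obtain ⟨p, q, -, hq, rfl⟩ := h
  lift m to ℕ using by omega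
  refine ⟨(X - C β) ^ m * p, q, hq, by simp [zero_pow (by omega : m ≠ 0)], ?_⟩
  rw [zpow_natCast, map_mul, map_pow, algebraMap_X_sub_C, mul_div_assoc]

theorem exists_hasOrdAt_of_mem_vanishingAt {β : ℂ} {r : RatFunc ℂ} (hr : r ∈ vanishingAt β)
    (hr₀ : r ≠ 0) : ∃ m : ℤ, 1 ≤ m ∧ HasOrdAt β r m := by
  obtain ⟨p, q, hq, hp, rfl⟩ := hr
  have hp₀ : p ≠ 0 := by rintro rfl; simp at hr₀
  refine ⟨p.rootMultiplicity β, by exact_mod_cast (rootMultiplicity_pos hp₀).mpr hp,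
    p /ₘ (X - C β) ^ p.rootMultiplicity β, q,
    eval_divByMonic_pow_rootMultiplicity_ne_zero β hp₀, hq, ?_⟩
  conv_lhs => rw [← pow_mul_divByMonic_rootMultiplicity_eq p β]
  rw [zpow_natCast, map_mul, map_pow, algebraMap_X_sub_C, mul_div_assoc]

theorem exists_hasOrdAt_neg_of_inv_mul_mem_vanishingAt {β : ℂ} {d : RatFunc ℂ} (hd : d ≠ 0)
    {ψ : ℂ[X]} (hψ : ψ.eval β ≠ 0)
    (h : d⁻¹ * algebraMap ℂ[X] (RatFunc ℂ) ψ ∈ vanishingAt β) :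
    ∃ t : ℤ, t ≤ -1 ∧ HasOrdAt β d t := by
  have hψ₀ : algebraMap ℂ[X] (RatFunc ℂ) ψ ≠ 0 :=
    RatFunc.algebraMap_ne_zero (by rintro rfl; simp at hψ)
  obtain ⟨m, hm, hord⟩ :=
    exists_hasOrdAt_of_mem_vanishingAt h (mul_ne_zero (inv_ne_zero hd) hψ₀)
  refine ⟨-m, by omega, ?_⟩
  convert hord.inv.mul_algebraMap_s8 hψ using 1
  field_simp

section LinearAlgebra

open Matrix

theorem Matrix.map_algebraMap_mulVec_mem {R A m n : Type*} [CommSemiring R] [Semiring A]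
    [Algebra R A] [Fintype n] (N : Submodule R A) (M : Matrix m n R) {v : n → A}
    (hv : ∀ k, v k ∈ N) (j : m) : (M.map (algebraMap R A) *ᵥ v) j ∈ N :=
  Submodule.sum_mem _ fun k _ => by
    simpa only [map_apply, ← Algebra.smul_def] using N.smul_mem (M j k) (hv k)

variable {m : Type*} [Fintype m] [DecidableEq m]

theorem Matrix.mul_mul_inv_mulVec_mulVec {K : Type*} [CommRing K] {A : Matrix m m K}
    (hA : IsUnit A.det) (B C : Matrix m m K) (v : m → K) :
    (A * B * C)⁻¹ *ᵥ (A *ᵥ v) = C⁻¹ *ᵥ (B⁻¹ *ᵥ v) := by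
  rw [mul_inv_rev, mul_inv_rev, mulVec_mulVec, Matrix.mul_assoc, Matrix.mul_assoc,
    nonsing_inv_mul A hA, Matrix.mul_one, ← mulVec_mulVec]

theorem Matrix.IsDiag.apply_self_ne_zero {K : Type*} [Field K] {D : Matrix m m K}
    (hD : D.IsDiag) (hdet : D.det ≠ 0) (j : m) : D j j ≠ 0 := by
  rw [← hD.diagonal_diag, det_diagonal] at hdet
  exact Finset.prod_ne_zero_iff.mp hdet j (Finset.mem_univ j)

theorem Matrix.IsDiag.inv_mulVec_apply {K : Type*} [Field K] {D : Matrix m m K}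
    (hD : D.IsDiag) (hdet : D.det ≠ 0) (v : m → K) (j : m) :
    (D⁻¹ *ᵥ v) j = (D j j)⁻¹ * v j := by
  have hinv : diagonal (fun i => (D i i)⁻¹) * D = 1 := calc
    diagonal (fun i => (D i i)⁻¹) * D = diagonal (fun i => (D i i)⁻¹) * diagonal D.diag := by
      rw [hD.diagonal_diag]
    _ = 1 := by
      rw [diagonal_mul_diagonal, ← diagonal_one]
      exact congrArg diagonal (funext fun i => inv_mul_cancel₀ (hD.apply_self_ne_zero hdet i))
  rw [inv_eq_left_inv hinv, mulVec_diagonal]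

theorem Submodule.mem_span_of_eq_sum {R M ι : Type*} [Semiring R] [AddCommMonoid M]
    [Module R M] [Fintype ι] {P : ι → Prop} {w : ι → M} {c : ι → R} {v : M}
    (hv : v = ∑ j, c j • w j) (hc : ∀ j, ¬P j → c j = 0) :
    v ∈ span R {u | ∃ j, P j ∧ u = w j} := by
  rw [hv]
  refine Submodule.sum_mem _ fun j _ => ?_
  by_cases hj : P j
  · exact smul_mem _ _ (subset_span ⟨j, hj, rfl⟩)
  · rw [hc j hj, zero_smul]
    exact zero_mem _

end LinearAlgebra

section PolynomialMatrix

open Matrix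

variable {n : ℕ}

theorem linearIndependent_evalCol {M : Matrix (Fin n) (Fin n) ℂ[X]} (hM : IsUnit M.det)
    (β : ℂ) : LinearIndependent ℂ (fun j => evalCol M j β) := by
  have hdet : IsUnit (M.map (evalRingHom β)).det := (evalRingHom β).map_det M ▸ hM.map _
  exact linearIndependent_cols_iff_isUnit.mpr ((isUnit_iff_isUnit_det _).mpr hdet)

theorem eval_mulVec_eq_sum_evalCol (M : Matrix (Fin n) (Fin n) ℂ[X]) (ψ : Fin n → ℂ[X])
    (β : ℂ) : (fun k => ((M *ᵥ ψ) k).eval β) = ∑ j, (ψ j).eval β • evalCol M j β := by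
  ext k
  simp only [mulVec, dotProduct, eval_finsetSum, eval_mul, Finset.sum_apply, Pi.smul_apply,
    smul_eq_mul, evalCol, mul_comm]

theorem isUnit_det_matRF {M : Matrix (Fin n) (Fin n) ℂ[X]} (hM : IsUnit M.det) :
    IsUnit (matRF M).det :=
  (algebraMap ℂ[X] (RatFunc ℂ)).map_det M ▸ hM.map _

theorem inv_matRF {M : Matrix (Fin n) (Fin n) ℂ[X]} (hM : IsUnit M.det) :
    (matRF M)⁻¹ = matRF M⁻¹ := by
  refine inv_eq_left_inv ?_
  rw [matRF, matRF, ← Matrix.map_mul, nonsing_inv_mul M hM,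
    Matrix.map_one _ (map_zero _) (map_one _)]

theorem matRF_mulVec (M : Matrix (Fin n) (Fin n) ℂ[X]) (φ : Fin n → ℂ[X]) :
    matRF M *ᵥ (fun k => algebraMap ℂ[X] (RatFunc ℂ) (φ k)) =
      fun k => algebraMap ℂ[X] (RatFunc ℂ) ((M *ᵥ φ) k) := by
  ext k
  exact (RingHom.map_mulVec _ M φ k).symm

end PolynomialMatrix

open Matrix in
theorem generalized_kernel_of_Q_inv_at_pole_general
    (n : ℕ)
    (Q : Matrix (Fin n) (Fin n) (RatFunc ℂ)) (hQ : Q.det ≠ 0)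
    (S T : Matrix (Fin n) (Fin n) (Polynomial ℂ))
    (hS : IsUnit S.det) (hT : IsUnit T.det)
    (D : Matrix (Fin n) (Fin n) (RatFunc ℂ))
    (hD : D = matRF S * Q * matRF T) (hdiag : D.IsDiag)
    (β : ℂ) :
    LinearIndependent ℂ
      (fun j : {j : Fin n // ∃ t : ℤ, t ≤ -1 ∧ HasOrdAt β (D j j) t} =>
        evalCol (S⁻¹) j.1 β) ∧
    ∀ φ : Fin n → Polynomial ℂ,
      (fun k => Polynomial.eval β (φ k)) ≠ 0 →
      (∀ k : Fin n,
          Q⁻¹.mulVec (fun j => algebraMap (Polynomial ℂ) (RatFunc ℂ) (φ j)) k = 0 ∨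
          ∃ m : ℤ, 1 ≤ m ∧
            HasOrdAt β (Q⁻¹.mulVec (fun j => algebraMap (Polynomial ℂ) (RatFunc ℂ) (φ j)) k) m) →
      (fun k => Polynomial.eval β (φ k)) ∈
        Submodule.span ℂ
          {v : Fin n → ℂ | ∃ j : Fin n, (∃ t : ℤ, t ≤ -1 ∧ HasOrdAt β (D j j) t) ∧
            v = evalCol (S⁻¹) j β} := by
  refine ⟨(linearIndependent_evalCol (isUnit_nonsing_inv_det S hS) β).comp Subtype.val
    Subtype.val_injective, fun φ _ hvanish => ?_⟩
  have hdet : D.det ≠ 0 := by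
    rw [hD, det_mul, det_mul]
    exact mul_ne_zero (mul_ne_zero (isUnit_det_matRF hS).ne_zero hQ)
      (isUnit_det_matRF hT).ne_zero
  have hpole : ∀ j, ((S *ᵥ φ) j).eval β ≠ 0 → ∃ t : ℤ, t ≤ -1 ∧ HasOrdAt β (D j j) t := by
    intro j hj
    refine exists_hasOrdAt_neg_of_inv_mul_mem_vanishingAt (hdiag.apply_self_ne_zero hdet j) hj ?_
    rw [← hdiag.inv_mulVec_apply hdet fun k => algebraMap ℂ[X] (RatFunc ℂ) ((S *ᵥ φ) k),
      ← matRF_mulVec, hD, mul_mul_inv_mulVec_mulVec (isUnit_det_matRF hS), inv_matRF hT]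
    refine map_algebraMap_mulVec_mem _ _ (fun k => ?_) j
    rcases hvanish k with h | ⟨m, hm, hord⟩
    · exact h ▸ zero_mem _
    · exact hord.mem_vanishingAt hm
  refine Submodule.mem_span_of_eq_sum ?_ fun j hj => by_contra fun h => hj (hpole j h)
  rw [← eval_mulVec_eq_sum_evalCol, mulVec_mulVec, nonsing_inv_mul S hS, one_mulVec]

/-- In the diagonalization setting `D = S·Q·T`, for `β ∈ ℂ` let
`Ω_p(β)` consist of the indices `j` with `ord_β(d_j) ≤ −1`. Then the vectors `Ŝ_j(β)`,
`j ∈ Ω_p(β)`, are linearly independent, and for every polynomial vector `φ̂` with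
`φ̂(β) ≠ 0` all of whose components of `Q⁻¹.mulVec φ̂` are zero or of order `≥ 1` at
`β`, the vector `φ̂(β)` lies in the span of `{Ŝ_j(β) : j ∈ Ω_p(β)}`: this span is the
generalized kernel of `Q⁻¹` at `β`, whose dimension is the geometric multiplicity of
the pole `β` of `Q`. -/
theorem generalized_kernel_of_Q_inv_at_pole
    (n : ℕ) (hn : 1 ≤ n)
    (Q : Matrix (Fin n) (Fin n) (RatFunc ℂ)) (hQ : Q.det ≠ 0)
    (S T : Matrix (Fin n) (Fin n) (Polynomial ℂ))
    (hS : IsUnit S.det) (hT : IsUnit T.det)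
    (D : Matrix (Fin n) (Fin n) (RatFunc ℂ))
    (hD : D = matRF S * Q * matRF T) (hdiag : D.IsDiag)
    (β : ℂ) :
    LinearIndependent ℂ
      (fun j : {j : Fin n // ∃ t : ℤ, t ≤ -1 ∧ HasOrdAt β (D j j) t} =>
        evalCol (S⁻¹) j.1 β) ∧
    ∀ φ : Fin n → Polynomial ℂ,
      (fun k => Polynomial.eval β (φ k)) ≠ 0 →
      (∀ k : Fin n,
          Q⁻¹.mulVec (fun j => algebraMap (Polynomial ℂ) (RatFunc ℂ) (φ j)) k = 0 ∨
          ∃ m : ℤ, 1 ≤ m ∧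
            HasOrdAt β (Q⁻¹.mulVec (fun j => algebraMap (Polynomial ℂ) (RatFunc ℂ) (φ j)) k) m) →
      (fun k => Polynomial.eval β (φ k)) ∈
        Submodule.span ℂ
          {v : Fin n → ℂ | ∃ j : Fin n, (∃ t : ℤ, t ≤ -1 ∧ HasOrdAt β (D j j) t) ∧
            v = evalCol (S⁻¹) j β} :=
  generalized_kernel_of_Q_inv_at_pole_general n Q hQ S T hS hT D hD hdiag β
end

section
/- In the diagonalization setting, fix an index i and a point α ∈ ℂ, and suppose the diagonal entry d_i has a zero of order s ≥ 1 at α (ord_α(d_i) = s). Define the vector φ̂_i := d_i • Ŝ_i over RatFunc ℂ. Then: (1) Q⁻¹.mulVec φ̂_i = T_i (the i-th column of T, regarded over RatFunc ℂ) and T_i(α) ≠ 0; (2) every nonzero component of φ̂_i has ord_α ≥ s; and (3) at least one component of φ̂_i has ord_α exactly equal to s. Thus φ̂_i is a pole cancellation function of Q⁻¹ at the pole α of exact order s. -/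
set_option synthInstance.maxHeartbeats 1000000
set_option maxHeartbeats 1000000

lemma algXsubC (α : ℂ) : algebraMap (Polynomial ℂ) (RatFunc ℂ) (Polynomial.X - Polynomial.C α)
    = RatFunc.X - RatFunc.C α := by
  rw [map_sub, RatFunc.algebraMap_X, RatFunc.algebraMap_C]

lemma XsubC_ne_zero (α : ℂ) : (RatFunc.X - RatFunc.C α : RatFunc ℂ) ≠ 0 := by
  rw [← algXsubC]
  exact RatFunc.algebraMap_ne_zero (Polynomial.X_sub_C_ne_zero α)

lemma hasOrdAt_mul {α : ℂ} {r r' : RatFunc ℂ} {k k' : ℤ}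
    (h : HasOrdAt α r k) (h' : HasOrdAt α r' k') : HasOrdAt α (r * r') (k + k') := by
  obtain ⟨p, q, hp, hq, hr⟩ := h
  obtain ⟨p', q', hp', hq', hr'⟩ := h'
  refine ⟨p * p', q * q', by simp [hp, hp'], by simp [hq, hq'], ?_⟩
  rw [hr, hr', zpow_add₀ (XsubC_ne_zero α), map_mul, map_mul]
  field_simp

lemma hasOrdAt_poly (α : ℂ) {p : Polynomial ℂ} (hp : p ≠ 0) :
    HasOrdAt α (algebraMap (Polynomial ℂ) (RatFunc ℂ) p) ((p.rootMultiplicity α : ℤ)) := by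
  obtain ⟨g, hg, hnd⟩ := p.exists_eq_pow_rootMultiplicity_mul_and_not_dvd hp α
  refine ⟨g, 1, ?_, by simp, ?_⟩
  · intro h
    exact hnd (Polynomial.dvd_iff_isRoot.2 h)
  · rw [map_one, div_one]
    conv_lhs => rw [hg]
    rw [map_mul, map_pow, algXsubC, zpow_natCast]

lemma exists_col_eval_ne_zero {n : ℕ} (M : Matrix (Fin n) (Fin n) (Polynomial ℂ))
    (hM : IsUnit M.det) (i : Fin n) (α : ℂ) :
    ∃ k, Polynomial.eval α (M k i) ≠ 0 := by
  by_contra h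
  push_neg at h
  have h1 : IsUnit ((Polynomial.evalRingHom α) M.det) := hM.map _
  rw [RingHom.map_det] at h1
  have h2 : ((Polynomial.evalRingHom α).mapMatrix M).det = 0 := by
    apply Matrix.det_eq_zero_of_column_eq_zero i
    intro k
    simpa using h k
  rw [h2] at h1
  exact h1.ne_zero rfl

/-- In the diagonalization setting `D = S·Q·T`, if the diagonal entry
`d_i = D i i` has a zero of order `s ≥ 1` at `α`, then for `φ̂_i := d_i • Ŝ_i` one has
`Q⁻¹.mulVec φ̂_i = T_i` with `T_i(α) ≠ 0`, every nonzero component of `φ̂_i` has order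
`≥ s` at `α`, and some component has order exactly `s`: `φ̂_i` is a pole cancellation
function of `Q⁻¹` at the pole `α` of exact order `s`. -/
theorem pole_cancellation_function_of_Q_inv_of_exact_order
    (n : ℕ) (hn : 1 ≤ n)
    (Q : Matrix (Fin n) (Fin n) (RatFunc ℂ)) (hQ : Q.det ≠ 0)
    (S T : Matrix (Fin n) (Fin n) (Polynomial ℂ))
    (hS : IsUnit S.det) (hT : IsUnit T.det)
    (D : Matrix (Fin n) (Fin n) (RatFunc ℂ))
    (hD : D = matRF S * Q * matRF T) (hdiag : D.IsDiag)
    (i : Fin n) (α : ℂ) (s : ℕ) (hs : 1 ≤ s)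
    (hzero : HasOrdAt α (D i i) (s : ℤ)) :
    (Q⁻¹.mulVec (D i i • colRF (S⁻¹) i) = colRF T i ∧ evalCol T i α ≠ 0) ∧
    (∀ k : Fin n, (D i i • colRF (S⁻¹) i) k ≠ 0 →
      ∃ m : ℤ, HasOrdAt α ((D i i • colRF (S⁻¹) i) k) m ∧ (s : ℤ) ≤ m) ∧
    (∃ k : Fin n, HasOrdAt α ((D i i • colRF (S⁻¹) i) k) (s : ℤ)) := by
  classical
  set A := matRF S with hA
  set B := matRF T with hB
  set A' := matRF (S⁻¹) with hA'
  set B' := matRF (T⁻¹) with hB'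
  have ringhom : ∀ (M N : Matrix (Fin n) (Fin n) (Polynomial ℂ)),
      matRF (M * N) = matRF M * matRF N := by
    intro M N
    ext k l
    simp [matRF, Matrix.mul_apply, map_sum]
  have matRF_one : matRF (1 : Matrix (Fin n) (Fin n) (Polynomial ℂ)) = 1 := by
    ext k l
    by_cases h : k = l <;> simp [matRF, Matrix.one_apply, h]
  have hAA' : A * A' = 1 := by
    rw [hA, hA', ← ringhom, Matrix.mul_nonsing_inv S hS, matRF_one]
  have hA'A : A' * A = 1 := by
    rw [hA, hA', ← ringhom, Matrix.nonsing_inv_mul S hS, matRF_one]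
  have hBB' : B * B' = 1 := by
    rw [hB, hB', ← ringhom, Matrix.mul_nonsing_inv T hT, matRF_one]
  have hB'B : B' * B = 1 := by
    rw [hB, hB', ← ringhom, Matrix.nonsing_inv_mul T hT, matRF_one]
  have hdetA : A.det ≠ 0 := by
    intro h
    have := congrArg Matrix.det hAA'
    rw [Matrix.det_mul, h, Matrix.det_one, zero_mul] at this
    exact zero_ne_one this
  have hdetB : B.det ≠ 0 := by
    intro h
    have := congrArg Matrix.det hBB'
    rw [Matrix.det_mul, h, Matrix.det_one, zero_mul] at this
    exact zero_ne_one this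
  have hdetD : D.det ≠ 0 := by
    rw [hD, Matrix.det_mul, Matrix.det_mul]
    exact mul_ne_zero (mul_ne_zero hdetA hQ) hdetB
  have hDu : IsUnit D.det := isUnit_iff_ne_zero.2 hdetD
  have hQeq : Q = A' * (D * B') := by
    rw [hD]
    simp only [Matrix.mul_assoc]
    rw [hBB', Matrix.mul_one, ← Matrix.mul_assoc, hA'A, Matrix.one_mul]
  have hQinv : Q⁻¹ = B * D⁻¹ * A := by
    apply Matrix.inv_eq_right_inv
    calc Q * (B * D⁻¹ * A) = A' * ((D * (B' * B)) * (D⁻¹ * A)) := by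
          rw [hQeq]; simp only [Matrix.mul_assoc]
      _ = A' * (D * (D⁻¹ * A)) := by rw [hB'B, Matrix.mul_one]
      _ = A' * ((D * D⁻¹) * A) := by rw [Matrix.mul_assoc]
      _ = A' * A := by rw [Matrix.mul_nonsing_inv D hDu, Matrix.one_mul]
      _ = 1 := hA'A
  -- the mulVec computation
  have hcolS : colRF (S⁻¹) i = A'.mulVec (Pi.single i 1) := by
    funext k
    simp [colRF, hA', matRF, Matrix.mulVec_single]
  have hDe : D.mulVec (Pi.single i (1 : RatFunc ℂ)) = D i i • (Pi.single i 1 : Fin n → RatFunc ℂ) := by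
    funext k
    by_cases h : k = i
    · subst h; simp
    · simp [Pi.single_apply, h, hdiag h]
  have key : Q⁻¹.mulVec (D i i • colRF (S⁻¹) i) = colRF T i := by
    rw [hQinv, hcolS, Matrix.mulVec_smul, Matrix.mulVec_mulVec]
    rw [Matrix.mul_assoc, Matrix.mul_assoc, hAA', Matrix.mul_one]
    rw [← Matrix.mulVec_smul, ← hDe, Matrix.mulVec_mulVec, Matrix.mul_assoc,
      Matrix.nonsing_inv_mul D hDu, Matrix.mul_one]
    funext k
    simp [colRF, hB, matRF]
  refine ⟨⟨key, ?_⟩, ?_, ?_⟩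
  · intro h0
    obtain ⟨k, hk⟩ := exists_col_eval_ne_zero T hT i α
    exact hk (congrFun h0 k)
  · intro k hk
    have hne : S⁻¹ k i ≠ 0 := by
      intro h
      apply hk
      simp [colRF, h]
    refine ⟨(s : ℤ) + ((S⁻¹ k i).rootMultiplicity α : ℤ), ?_, by omega⟩
    have := hasOrdAt_mul hzero (hasOrdAt_poly α hne)
    simpa [colRF, smul_eq_mul] using this
  · obtain ⟨k, hk⟩ := exists_col_eval_ne_zero (S⁻¹) (Matrix.isUnit_nonsing_inv_det S hS) i α
    refine ⟨k, ?_⟩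
    have hne : S⁻¹ k i ≠ 0 := fun h => hk (by simp [h])
    have hrm : (S⁻¹ k i).rootMultiplicity α = 0 :=
      Polynomial.rootMultiplicity_eq_zero hk
    have := hasOrdAt_mul hzero (hasOrdAt_poly α hne)
    rw [hrm] at this
    simpa [colRF, smul_eq_mul] using this
end

section
/- Let n ≥ 1 and m ≥ 1, let A_0, A_1, …, A_m be n×n complex matrices, let α ∈ ℂ with α ≠ 0, and let φ : Fin n → ℂ satisfy φ i ≠ 0 for every i. Assume the algebraic condition ∑_{k=0}^{m} α^{m−k} • (A_k).mulVec φ = 0 (i.e., φ is in the kernel of the matrix A_m + A_{m−1} α + ⋯ + A_0 α^m after multiplying through by α^m). Define u : Fin n → ℂ → ℂ by u i t := (φ i)⁻¹ * Complex.exp (α * t). Then for every t ∈ ℂ, ∑_{k=0}^{m} (A_k).mulVec (fun i => (iteratedDeriv k (u i) t)⁻¹) = 0; that is, the vector function u solves the nonlinear system of differential equations A_m (u^{(m)})^{−1} + A_{m−1} (u^{(m−1)})^{−1} + ⋯ + A_0 u^{−1} = 0, where for a vector v, v^{−1} denotes the vector of entrywise reciprocals and u^{(k)} denotes the vector of k-th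 derivatives. -/
open Complex

/-! Since `u⁽ᵏ⁾ = α^k u`, the reciprocal of the `k`-th derivative is `α^(-k) e^(-αt) φ`, so the
left-hand side of the system is `α^(-m) e^(-αt) ∑ α^(m-k) A_k φ`, which vanishes by assumption. -/

theorem Finset.sum_inv_pow_smul_eq_inv_pow_smul_sum {K M : Type*} [Field K] [AddCommGroup M]
    [Module K M] {m : ℕ} {α : K} (hα : α ≠ 0) (v : Fin (m + 1) → M) :
    ∑ k : Fin (m + 1), (α ^ (k : ℕ))⁻¹ • v k =
      (α ^ m)⁻¹ • ∑ k : Fin (m + 1), α ^ (m - (k : ℕ)) • v k := by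
  rw [Finset.smul_sum]
  refine Finset.sum_congr rfl fun k _ => ?_
  rw [smul_smul, pow_sub₀ α hα (Nat.lt_succ_iff.mp k.isLt), inv_mul_cancel_left₀ (pow_ne_zero m hα)]

theorem inv_iteratedDeriv_inv_mul_cexp {ι : Type*} (φ : ι → ℂ) (α t : ℂ) (k : ℕ) :
    (fun i => (iteratedDeriv k (fun s => (φ i)⁻¹ * exp (α * s)) t)⁻¹)
      = (exp (α * t))⁻¹ • (α ^ k)⁻¹ • φ := by
  funext i
  simp only [iteratedDeriv_const_mul_field, iteratedDeriv_cexp_const_mul, Pi.smul_apply,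
    smul_eq_mul, mul_inv, inv_inv]
  ring

theorem solution_of_nonlinear_system_from_eigenvector_general
    (n m : ℕ)
    (A : Fin (m + 1) → Matrix (Fin n) (Fin n) ℂ)
    (α : ℂ) (hα : α ≠ 0)
    (φ : Fin n → ℂ)
    (hker : ∑ k : Fin (m + 1), α ^ (m - (k : ℕ)) • (A k).mulVec φ = 0) :
    ∀ t : ℂ,
      ∑ k : Fin (m + 1),
        (A k).mulVec
          (fun i => (iteratedDeriv (k : ℕ) (fun s => (φ i)⁻¹ * Complex.exp (α * s)) t)⁻¹) = 0 := by
  intro t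
  simp only [inv_iteratedDeriv_inv_mul_cexp, Matrix.mulVec_smul]
  rw [← Finset.smul_sum, Finset.sum_inv_pow_smul_eq_inv_pow_smul_sum hα, hker, smul_zero, smul_zero]

/-- Let `A_0, …, A_m` be `n × n` complex matrices, `α ≠ 0`, and let
`φ` be a vector all of whose components are nonzero such that
`∑_{k=0}^m α^(m−k) • A_k.mulVec φ = 0`.  Then the vector function
`u i t := (φ i)⁻¹ · exp (α t)` solves the nonlinear system
`A_m (u^(m))⁻¹ + A_{m−1} (u^(m−1))⁻¹ + ⋯ + A_0 u⁻¹ = 0`, where inverses of vectors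
are taken entrywise. -/
theorem solution_of_nonlinear_system_from_eigenvector
    (n m : ℕ) (hn : 1 ≤ n) (hm : 1 ≤ m)
    (A : Fin (m + 1) → Matrix (Fin n) (Fin n) ℂ)
    (α : ℂ) (hα : α ≠ 0)
    (φ : Fin n → ℂ) (hφ : ∀ i, φ i ≠ 0)
    (hker : ∑ k : Fin (m + 1), α ^ (m - (k : ℕ)) • (A k).mulVec φ = 0) :
    ∀ t : ℂ,
      ∑ k : Fin (m + 1),
        (A k).mulVec
          (fun i => (iteratedDeriv (k : ℕ) (fun s => (φ i)⁻¹ * Complex.exp (α * s)) t)⁻¹) = 0 :=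
  solution_of_nonlinear_system_from_eigenvector_general n m A α hα φ hker
end

section
/- Let n ≥ 1, let A be an n×n complex matrix, let α ∈ ℂ, let l ≥ 1, and let φ : Fin n → ℂ[X] be a vector of polynomials. For j ∈ ℕ define the Taylor coefficient vectors c_j : Fin n → ℂ by c_j i := coefficient of degree j of the polynomial (Polynomial.taylor α) (φ i), so that φ i = ∑_j c_j i • (X − α)^j. Suppose that for every i, the i-th component of the polynomial vector (A − z I)·φ(z), namely (∑_k A i k • φ k) − X * φ i, is divisible by (X − α)^l in ℂ[X]. Then A.mulVec c_0 = α • c_0, and for every j with 1 ≤ j ≤ l − 1, A.mulVec c_j − α • c_j = c_{j−1}; that is, the Taylor coefficients c_0, c_1, …, c_{l−1} of a root function of A − zI at α form a Jordan chain of the matrix A at the eigenvalue α. -/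
open Polynomial

/-- Key computation: the `j`-th Taylor coefficient relation for `j < l`. -/
lemma jordan_chain_key
    (n : ℕ) (A : Matrix (Fin n) (Fin n) ℂ) (α : ℂ) (l : ℕ)
    (φ : Fin n → Polynomial ℂ)
    (c : ℕ → Fin n → ℂ)
    (hc : ∀ (j : ℕ) (i : Fin n), c j i = ((Polynomial.taylor α) (φ i)).coeff j)
    (hdiv : ∀ i : Fin n,
      (Polynomial.X - Polynomial.C α) ^ l ∣
        ((∑ k : Fin n, A i k • φ k) - Polynomial.X * φ i))
    (j : ℕ) (hj : j < l) (i : Fin n) :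
    (∑ k, A i k * c j k) - α * c j i = (X * (taylor α (φ i))).coeff j := by
  obtain ⟨q, hq⟩ := hdiv i
  have htay := congrArg (taylor α) hq
  rw [map_sub, map_sum, taylor_mul, taylor_mul] at htay
  have hpow : taylor α ((X - C α) ^ l) = X ^ l := by
    simp [taylor_apply, Polynomial.pow_comp, Polynomial.sub_comp]
  rw [hpow, taylor_X] at htay
  have hco := congrArg (fun p => p.coeff j) htay
  simp only [Polynomial.coeff_sub, Polynomial.finset_sum_coeff] at hco
  have hz : (X ^ l * taylor α q).coeff j = 0 := by
    exact (Polynomial.X_pow_dvd_iff.mp ⟨_, rfl⟩) j hj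
  rw [hz] at hco
  have hsum : ∀ k, ((taylor α) (A i k • φ k)).coeff j = A i k * c j k := by
    intro k
    rw [map_smul, Polynomial.coeff_smul, hc, smul_eq_mul]
  have hXφ : ((X + C α) * taylor α (φ i)).coeff j
      = (X * taylor α (φ i)).coeff j + α * c j i := by
    rw [add_mul, Polynomial.coeff_add, Polynomial.coeff_C_mul, hc]
  rw [Finset.sum_congr rfl (fun k _ => hsum k), hXφ] at hco
  linear_combination hco
  
/-- Let `A` be an `n × n` complex matrix, `α ∈ ℂ`, `l ≥ 1`, and let
`φ` be a vector of polynomials whose Taylor coefficient vectors at `α` are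
`c_j i := ((Polynomial.taylor α) (φ i)).coeff j`.  If for every `i` the `i`-th
component of `(A − z I)·φ(z)`, namely `(∑ k, A i k • φ k) − X * φ i`, is divisible by
`(X − α)^l`, then `A.mulVec c_0 = α • c_0` and `A.mulVec c_j − α • c_j = c_{j−1}` for
`1 ≤ j ≤ l − 1`: the Taylor coefficients `c_0, …, c_{l−1}` of a root function of
`A − z I` at `α` form a Jordan chain of `A` at the eigenvalue `α`. -/
theorem taylor_coefficients_of_root_function_form_jordan_chain
    (n : ℕ) (hn : 1 ≤ n)
    (A : Matrix (Fin n) (Fin n) ℂ) (α : ℂ) (l : ℕ) (hl : 1 ≤ l)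
    (φ : Fin n → Polynomial ℂ)
    (c : ℕ → Fin n → ℂ)
    (hc : ∀ (j : ℕ) (i : Fin n), c j i = ((Polynomial.taylor α) (φ i)).coeff j)
    (hdiv : ∀ i : Fin n,
      (Polynomial.X - Polynomial.C α) ^ l ∣
        ((∑ k : Fin n, A i k • φ k) - Polynomial.X * φ i)) :
    A.mulVec (c 0) = α • c 0 ∧
    ∀ j : ℕ, 1 ≤ j → j ≤ l - 1 → A.mulVec (c j) - α • c j = c (j - 1) := by
  constructor
  · funext i
    have h := jordan_chain_key n A α l φ c hc hdiv 0 (by omega) i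
    simp only [Polynomial.mul_coeff_zero, Polynomial.coeff_X_zero, zero_mul] at h
    have := sub_eq_zero.mp h
    simpa [Matrix.mulVec, dotProduct, Pi.smul_apply, smul_eq_mul] using this
  · intro j hj1 hjl
    funext i
    have h := jordan_chain_key n A α l φ c hc hdiv j (by omega) i
    obtain ⟨m, rfl⟩ : ∃ m, j = m + 1 := ⟨j - 1, by omega⟩
    rw [Polynomial.coeff_X_mul, ← hc] at h
    simpa [Matrix.mulVec, dotProduct, Pi.smul_apply, smul_eq_mul] using h
end
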